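/- arXiv:2502.04023 — 8 statements merged into one kernel-verified Lean document; each statement's English description precedes it below -/
import Mathlib

section
/- Let (V;ρl,ρm,ρr) be a representation of a 3-Leibniz algebra g. Then g⊕V equipped with the hemisemidirect product operations [(x,u),(y,v),(z,w)]_⊢ = ([x,y,z], ρl(x,y,w)), [(x,u),(y,v),(z,w)]_⊥ = ([x,y,z], ρm(x,v,z)), [(x,u),(y,v),(z,w)]_⊣ = ([x,y,z], ρr(u,y,z)) is a 3-tri-Leibniz algebra. -/
universe u v

/-- A map of three arguments is trilinear if it is additive and homogeneous in each slot. -/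
def IsTrilinear (K : Type u) [Field K] {A B C D : Type*}
    [AddCommGroup A] [Module K A] [AddCommGroup B] [Module K B]
    [AddCommGroup C] [Module K C] [AddCommGroup D] [Module K D]
    (f : A → B → C → D) : Prop :=
  (∀ a a' b c, f (a + a') b c = f a b c + f a' b c) ∧
  (∀ (k : K) a b c, f (k • a) b c = k • f a b c) ∧
  (∀ a b b' c, f a (b + b') c = f a b c + f a b' c) ∧
  (∀ (k : K) a b c, f a (k • b) c = k • f a b c) ∧
  (∀ a b c c', f a b (c + c') = f a b c + f a b c') ∧
  (∀ (k : K) a b c, f a b (k • c) = k • f a b c)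

/-- A map of two arguments is bilinear if it is additive and homogeneous in each slot. -/
def IsBilinear (K : Type u) [Field K] {A B C : Type*}
    [AddCommGroup A] [Module K A] [AddCommGroup B] [Module K B]
    [AddCommGroup C] [Module K C] (f : A → B → C) : Prop :=
  (∀ a a' b, f (a + a') b = f a b + f a' b) ∧
  (∀ (k : K) a b, f (k • a) b = k • f a b) ∧
  (∀ a b b', f a (b + b') = f a b + f a b') ∧
  (∀ (k : K) a b, f a (k • b) = k • f a b)

/-- A 3-Leibniz algebra structure: a trilinear bracket satisfying the fundamental identity. -/
def Is3Leibniz (K : Type u) [Field K] {g : Type*} [AddCommGroup g] [Module K g]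
    (br : g → g → g → g) : Prop :=
  IsTrilinear K br ∧
  ∀ a b x y z, br a b (br x y z) = br (br a b x) y z + br x (br a b y) z + br x y (br a b z)

/-- A representation of a 3-Leibniz algebra `(g, br)` on a vector space `V`. -/
def IsRep (K : Type u) [Field K] {g V : Type*} [AddCommGroup g] [Module K g]
    [AddCommGroup V] [Module K V] (br : g → g → g → g)
    (ρl : g → g → V → V) (ρm : g → V → g → V) (ρr : V → g → g → V) : Prop :=
  IsTrilinear K ρl ∧ IsTrilinear K ρm ∧ IsTrilinear K ρr ∧
  (∀ a b x y u, ρl a b (ρl x y u) = ρl (br a b x) y u + ρl x (br a b y) u + ρl x y (ρl a b u)) ∧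
  (∀ a b x u z, ρl a b (ρm x u z) = ρm (br a b x) u z + ρm x (ρl a b u) z + ρm x u (br a b z)) ∧
  (∀ a b u y z, ρl a b (ρr u y z) = ρr (ρl a b u) y z + ρr u (br a b y) z + ρr u y (br a b z)) ∧
  (∀ a u x y z, ρm a u (br x y z) = ρr (ρm a u x) y z + ρm x (ρm a u y) z + ρl x y (ρm a u z)) ∧
  (∀ u b x y z, ρr u b (br x y z) = ρr (ρr u b x) y z + ρm x (ρr u b y) z + ρl x y (ρr u b z))

/-- A 3-tri-Leibniz algebra: three trilinear operations `ol = [·,·,·]_⊢`, `od = [·,·,·]_⊣`,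
`op = [·,·,·]_⊥` satisfying the five families of axioms, where `tri` ranges over the three
operations (the symbol `△`). -/
def Is3TriLeibniz (K : Type u) [Field K] {g : Type*} [AddCommGroup g] [Module K g]
    (ol od op : g → g → g → g) : Prop :=
  IsTrilinear K ol ∧ IsTrilinear K od ∧ IsTrilinear K op ∧
  ∀ tri : g → g → g → g, (tri = ol ∨ tri = od ∨ tri = op) → ∀ a b x y z : g,
    od a b (tri x y z) = od (od a b x) y z + op x (od a b y) z + ol x y (od a b z) ∧
    ol a b (od x y z) = od (ol a b x) y z + od x (tri a b y) z + od x y (tri a b z) ∧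
    ol a b (ol x y z) = ol (tri a b x) y z + ol x (tri a b y) z + ol x y (ol a b z) ∧
    ol a b (op x y z) = op (tri a b x) y z + op x (ol a b y) z + op x y (tri a b z) ∧
    op a b (tri x y z) = od (op a b x) y z + op x (op a b y) z + ol x y (op a b z)

/-- An embedding tensor on a 3-Leibniz algebra `(g, br)` with respect to a representation. -/
def IsEmbeddingTensor (K : Type u) [Field K] {g V : Type*} [AddCommGroup g] [Module K g]
    [AddCommGroup V] [Module K V] (br : g → g → g → g)
    (ρl : g → g → V → V) (ρm : g → V → g → V) (ρr : V → g → g → V)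
    (T : V →ₗ[K] g) : Prop :=
  ∀ u v w : V,
    br (T u) (T v) (T w) = T (ρl (T u) (T v) w) ∧
    br (T u) (T v) (T w) = T (ρm (T u) v (T w)) ∧
    br (T u) (T v) (T w) = T (ρr u (T v) (T w))

/-- An averaging operator on a 3-Leibniz algebra `(g, br)`. -/
def IsAveraging (K : Type u) [Field K] {g : Type*} [AddCommGroup g] [Module K g]
    (br : g → g → g → g) (T : g →ₗ[K] g) : Prop :=
  ∀ x y z : g,
    br (T x) (T y) (T z) = T (br (T x) (T y) z) ∧
    br (T x) (T y) (T z) = T (br (T x) y (T z)) ∧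
    br (T x) (T y) (T z) = T (br x (T y) (T z))

/-- A Nijenhuis operator on a 3-tri-Leibniz algebra `(h, ol, od, op)`. -/
def IsNijenhuisOp (K : Type u) [Field K] {h : Type*} [AddCommGroup h] [Module K h]
    (ol od op : h → h → h → h) (N : h →ₗ[K] h) : Prop :=
  ∀ tri : h → h → h → h, (tri = ol ∨ tri = od ∨ tri = op) → ∀ x y z : h,
    tri (N x) (N y) (N z) =
      N (tri x (N y) (N z) + tri (N x) y (N z) + tri (N x) (N y) z)
        - N (N (tri (N x) y z + tri x (N y) z + tri x y (N z)))
        + N (N (N (tri x y z)))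

/-- An action of a 3-Leibniz algebra `(g, brg)` on a 3-Leibniz algebra `(h, brh)`. -/
def IsAction (K : Type u) [Field K] {g h : Type*} [AddCommGroup g] [Module K g]
    [AddCommGroup h] [Module K h] (brg : g → g → g → g) (brh : h → h → h → h)
    (ρl : g → g → h → h) (ρm : g → h → g → h) (ρr : h → g → g → h) : Prop :=
  IsRep K brg ρl ρm ρr ∧
  (∀ a b u v w, ρl a b (brh u v w) =
      brh (ρl a b u) v w + brh u (ρl a b v) w + brh u v (ρl a b w)) ∧
  (∀ a s x y z u v w, brh (ρm a s x) v w + brh u (ρm a s y) w + brh u v (ρm a s z) = 0) ∧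
  (∀ s a x y z u v w, brh (ρr s a x) v w + brh u (ρr s a y) w + brh u v (ρr s a z) = 0) ∧
  (∀ a b u v w, ρl a b (brh u v w) = brh u v (ρl a b w)) ∧
  (∀ a b u v w, ρm a (brh u v w) b = brh u v (ρm a w b)) ∧
  (∀ a b u v w, ρr (brh u v w) a b = brh u v (ρr w a b))

/-- A 3-tri-Leibniz dialgebra: a 3-Leibniz bracket `br` together with a 3-tri-Leibniz
structure `(ol, od, op)` satisfying the compatibility conditions. -/
def Is3TriLeibnizDialgebra (K : Type u) [Field K] {g : Type*} [AddCommGroup g] [Module K g]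
    (br ol od op : g → g → g → g) : Prop :=
  Is3Leibniz K br ∧ Is3TriLeibniz K ol od op ∧
  ∀ tri : g → g → g → g, (tri = ol ∨ tri = od ∨ tri = op) → ∀ a b x y z : g,
    ol a b (br x y z) = br (ol a b x) y z + br x (ol a b y) z + br x y (ol a b z) ∧
    br (op a b x) y z + br x (op a b y) z + br x y (op a b z) = 0 ∧
    br (od a b x) y z + br x (od a b y) z + br x y (od a b z) = 0 ∧
    ol a b (br x y z) = br x y (ol a b z) ∧
    op a (br x y z) b = br x y (op a z b) ∧
    od (br x y z) a b = br x y (od z a b) ∧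
    ol (br x y z) a b = ol (tri x y z) a b ∧
    ol a (br x y z) b = ol a (tri x y z) b ∧
    op (br x y z) a b = op (tri x y z) a b ∧
    op a b (br x y z) = op a b (tri x y z) ∧
    od a b (br x y z) = od a b (tri x y z) ∧
    od a (br x y z) b = od a (tri x y z) b

/-- the hemisemidirect product of a 3-Leibniz algebra `g` with a
representation `V` is a 3-tri-Leibniz algebra (operations in the order `⊢`, `⊣`, `⊥`). -/
theorem statement1 (K : Type u) [Field K] [CharZero K] {g V : Type*}
    [AddCommGroup g] [Module K g] [AddCommGroup V] [Module K V]
    (br : g → g → g → g) (hbr : Is3Leibniz K br)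
    (ρl : g → g → V → V) (ρm : g → V → g → V) (ρr : V → g → g → V)
    (hrep : IsRep K br ρl ρm ρr) :
    Is3TriLeibniz K
      (fun p q r : g × V => (br p.1 q.1 r.1, ρl p.1 q.1 r.2))
      (fun p q r : g × V => (br p.1 q.1 r.1, ρr p.2 q.1 r.1))
      (fun p q r : g × V => (br p.1 q.1 r.1, ρm p.1 q.2 r.1)) := by
  obtain ⟨⟨b1, b2, b3, b4, b5, b6⟩, hJ⟩ := hbr
  obtain ⟨⟨l1, l2, l3, l4, l5, l6⟩, ⟨m1, m2, m3, m4, m5, m6⟩, ⟨r1, r2, r3, r4, r5, r6⟩,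
    h1, h2, h3, h4, h5⟩ := hrep
  refine ⟨⟨?_, ?_, ?_, ?_, ?_, ?_⟩, ⟨?_, ?_, ?_, ?_, ?_, ?_⟩, ⟨?_, ?_, ?_, ?_, ?_, ?_⟩, ?_⟩
  · intro a a' b c; simp [Prod.ext_iff, b1, l1]
  · intro k a b c; simp [Prod.ext_iff, b2, l2]
  · intro a b b' c; simp [Prod.ext_iff, b3, l3]
  · intro k a b c; simp [Prod.ext_iff, b4, l4]
  · intro a b c c'; simp [Prod.ext_iff, b5, l5]
  · intro k a b c; simp [Prod.ext_iff, b6, l6]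
  · intro a a' b c; simp [Prod.ext_iff, b1, r1]
  · intro k a b c; simp [Prod.ext_iff, b2, r2]
  · intro a b b' c; simp [Prod.ext_iff, b3, r3]
  · intro k a b c; simp [Prod.ext_iff, b4, r4]
  · intro a b c c'; simp [Prod.ext_iff, b5, r5]
  · intro k a b c; simp [Prod.ext_iff, b6, r6]
  · intro a a' b c; simp [Prod.ext_iff, b1, m1]
  · intro k a b c; simp [Prod.ext_iff, b2, m2]
  · intro a b b' c; simp [Prod.ext_iff, b3, m3]
  · intro k a b c; simp [Prod.ext_iff, b4, m4]
  · intro a b c c'; simp [Prod.ext_iff, b5, m5]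
  · intro k a b c; simp [Prod.ext_iff, b6, m6]
  · intro tri htri a b x y z
    rcases htri with rfl | rfl | rfl <;>
      exact ⟨Prod.ext (hJ _ _ _ _ _) (h5 _ _ _ _ _),
        Prod.ext (hJ _ _ _ _ _) (h3 _ _ _ _ _),
        Prod.ext (hJ _ _ _ _ _) (h1 _ _ _ _ _),
        Prod.ext (hJ _ _ _ _ _) (h2 _ _ _ _ _),
        Prod.ext (hJ _ _ _ _ _) (h4 _ _ _ _ _)⟩
end

section
/- Let (V;ρl,ρm,ρr) be a representation of a 3-Leibniz algebra g. A linear map T: V→g is an embedding tensor on g with respect to (V;ρl,ρm,ρr) if and only if the linear map N_T: g⊕V → g⊕V defined by N_T(x,u) = (Tu,0) is a Nijenhuis operator on the hemisemidirect product 3-tri-Leibniz algebra g⊕V. -/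
universe u v

/-- `T : V → g` is an embedding tensor iff `N_T : g ⊕ V → g ⊕ V`,
`(x,u) ↦ (Tu, 0)`, is a Nijenhuis operator on the hemisemidirect product
3-tri-Leibniz algebra `g ⊕ V`. -/
theorem statement2 (K : Type u) [Field K] [CharZero K] {g V : Type*}
    [AddCommGroup g] [Module K g] [AddCommGroup V] [Module K V]
    (br : g → g → g → g) (hbr : Is3Leibniz K br)
    (ρl : g → g → V → V) (ρm : g → V → g → V) (ρr : V → g → g → V)
    (hrep : IsRep K br ρl ρm ρr) (T : V →ₗ[K] g) :
    IsEmbeddingTensor K br ρl ρm ρr T ↔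
      IsNijenhuisOp K
        (fun p q r : g × V => (br p.1 q.1 r.1, ρl p.1 q.1 r.2))
        (fun p q r : g × V => (br p.1 q.1 r.1, ρr p.2 q.1 r.1))
        (fun p q r : g × V => (br p.1 q.1 r.1, ρm p.1 q.2 r.1))
        ((LinearMap.inl K g V).comp (T.comp (LinearMap.snd K g V))) := by
  obtain ⟨hl, hm, hr, _⟩ := hrep
  have hl0 : ∀ a b, ρl a b (0:V) = 0 := by
    intro a b
    have := hl.2.2.2.2.2 (0:K) a b 0
    simpa using this
  have hm0 : ∀ a c, ρm a (0:V) c = 0 := by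
    intro a c
    have := hm.2.2.2.1 (0:K) a 0 c
    simpa using this
  have hr0 : ∀ b c, ρr (0:V) b c = 0 := by
    intro b c
    have := hr.2.1 (0:K) 0 b c
    simpa using this
  have hNapp : ∀ p : g × V,
      ((LinearMap.inl K g V).comp (T.comp (LinearMap.snd K g V))) p = (T p.2, (0:V)) :=
    fun p => rfl
  constructor
  · rintro hT tri (rfl|rfl|rfl) x y z
    · obtain ⟨h1, h2, h3⟩ := hT x.2 y.2 z.2
      simp [hNapp, hl0, Prod.ext_iff, h1]
    · obtain ⟨h1, h2, h3⟩ := hT x.2 y.2 z.2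
      simp [hNapp, hr0, Prod.ext_iff, h3]
    · obtain ⟨h1, h2, h3⟩ := hT x.2 y.2 z.2
      simp [hNapp, hm0, Prod.ext_iff, h2]
  · intro hN u v w
    refine ⟨?_, ?_, ?_⟩
    · have := hN _ (Or.inl rfl) ((0:g), u) ((0:g), v) ((0:g), w)
      simp [hNapp, hl0, Prod.ext_iff] at this
      exact this
    · have := hN _ (Or.inr (Or.inr rfl)) ((0:g), u) ((0:g), v) ((0:g), w)
      simp [hNapp, hm0, Prod.ext_iff] at this
      exact this
    · have := hN _ (Or.inr (Or.inl rfl)) ((0:g), u) ((0:g), v) ((0:g), w)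
      simp [hNapp, hr0, Prod.ext_iff] at this
      exact this
end

section
/- Let g be a 3-Leibniz algebra and T: g→g an averaging operator. Then g with the operations [x,y,z]_⊢^T := [Tx,Ty,z], [x,y,z]_⊥^T := [Tx,y,Tz], [x,y,z]_⊣^T := [x,Ty,Tz] is a 3-tri-Leibniz algebra. -/
universe u v

/-- an averaging operator `T` on a 3-Leibniz algebra `g` induces a
3-tri-Leibniz algebra structure on `g` by `[x,y,z]_⊢ = [Tx,Ty,z]`,
`[x,y,z]_⊥ = [Tx,y,Tz]`, `[x,y,z]_⊣ = [x,Ty,Tz]`. -/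
theorem statement5 (K : Type u) [Field K] [CharZero K] {g : Type*}
    [AddCommGroup g] [Module K g]
    (br : g → g → g → g) (hbr : Is3Leibniz K br)
    (T : g →ₗ[K] g) (hT : IsAveraging K br T) :
    Is3TriLeibniz K
      (fun x y z : g => br (T x) (T y) z)
      (fun x y z : g => br x (T y) (T z))
      (fun x y z : g => br (T x) y (T z)) := by
  obtain ⟨⟨h1, h2, h3, h4, h5, h6⟩, hfund⟩ := hbr
  refine ⟨⟨?_, ?_, ?_, ?_, ?_, ?_⟩, ⟨?_, ?_, ?_, ?_, ?_, ?_⟩, ⟨?_, ?_, ?_, ?_, ?_, ?_⟩, ?_⟩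
  · intro a a' b c; simp [map_add, h1]
  · intro k a b c; simp [map_smul, h2]
  · intro a b b' c; simp [map_add, h3]
  · intro k a b c; simp [map_smul, h4]
  · intro a b c c'; simp [h5]
  · intro k a b c; simp [h6]
  · intro a a' b c; simp [h1]
  · intro k a b c; simp [h2]
  · intro a b b' c; simp [map_add, h3]
  · intro k a b c; simp [map_smul, h4]
  · intro a b c c'; simp [map_add, h5]
  · intro k a b c; simp [map_smul, h6]
  · intro a a' b c; simp [map_add, h1]
  · intro k a b c; simp [map_smul, h2]
  · intro a b b' c; simp [h3]
  · intro k a b c; simp [h4]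
  · intro a b c c'; simp [map_add, h5]
  · intro k a b c; simp [map_smul, h6]
  · intro tri htri a b x y z
    have hTtri : ∀ u v w, T (tri u v w) = br (T u) (T v) (T w) := by
      rcases htri with rfl | rfl | rfl
      · intro u v w; exact ((hT u v w).1).symm
      · intro u v w; exact ((hT u v w).2.2).symm
      · intro u v w; exact ((hT u v w).2.1).symm
    refine ⟨?_, ?_, ?_, ?_, ?_⟩
    · show br a (T b) (T (tri x y z)) = _
      simp only [hTtri]
      exact hfund a (T b) (T x) (T y) (T z)
    · show br (T a) (T b) (br x (T y) (T z)) = _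
      simp only [hTtri]
      exact hfund (T a) (T b) x (T y) (T z)
    · show br (T a) (T b) (br (T x) (T y) z) = _
      simp only [hTtri]
      exact hfund (T a) (T b) (T x) (T y) z
    · show br (T a) (T b) (br (T x) y (T z)) = _
      simp only [hTtri]
      exact hfund (T a) (T b) (T x) y (T z)
    · show br (T a) b (T (tri x y z)) = _
      simp only [hTtri]
      exact hfund (T a) b (T x) (T y) (T z)
end

section
/- Let (g,[·,·,·]_g) and (h,[·,·,·]_h) be 3-Leibniz algebras and let ρl: g×g×h→h, ρm: g×h×g→h, ρr: h×g×g→h be trilinear maps. Then (h,[·,·,·]_h; ρl,ρm,ρr) is an action of g on h if and only if g⊕h with the bracket [(x,u),(y,v),(z,w)] := ([x,y,z]_g, ρl(x,y,w)+ρm(x,v,z)+ρr(u,y,z)+[u,v,w]_h) is a 3-Leibniz algebra. -/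
universe u v

lemma trilin_zero (K : Type u) [Field K] {A B C D : Type*}
    [AddCommGroup A] [Module K A] [AddCommGroup B] [Module K B]
    [AddCommGroup C] [Module K C] [AddCommGroup D] [Module K D]
    {f : A → B → C → D} (hf : IsTrilinear K f) :
    (∀ b c, f 0 b c = 0) ∧ (∀ a c, f a 0 c = 0) ∧ (∀ a b, f a b 0 = 0) := by
  obtain ⟨-, h2, -, h4, -, h6⟩ := hf
  refine ⟨fun b c => ?_, fun a c => ?_, fun a b => ?_⟩
  · simpa using h2 0 0 b c
  · simpa using h4 0 a 0 c
  · simpa using h6 0 a b 0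

/-- `(h, brh; ρl, ρm, ρr)` is an action of the 3-Leibniz algebra `g` iff
`g ⊕ h` with the bracket
`[(x,u),(y,v),(z,w)] = ([x,y,z], ρl(x,y,w) + ρm(x,v,z) + ρr(u,y,z) + [u,v,w]_h)`
is a 3-Leibniz algebra. -/
theorem statement8 (K : Type u) [Field K] [CharZero K] {g h : Type*}
    [AddCommGroup g] [Module K g] [AddCommGroup h] [Module K h]
    (brg : g → g → g → g) (hg : Is3Leibniz K brg)
    (brh : h → h → h → h) (hh : Is3Leibniz K brh)
    (ρl : g → g → h → h) (ρm : g → h → g → h) (ρr : h → g → g → h)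
    (hl : IsTrilinear K ρl) (hm : IsTrilinear K ρm) (hr : IsTrilinear K ρr) :
    IsAction K brg brh ρl ρm ρr ↔
      Is3Leibniz K (fun p q r : g × h =>
        (brg p.1 q.1 r.1,
          ρl p.1 q.1 r.2 + ρm p.1 q.2 r.1 + ρr p.2 q.1 r.1 + brh p.2 q.2 r.2)) := by
  obtain ⟨hgt, hgFI⟩ := hg
  obtain ⟨hht, hhFI⟩ := hh
  obtain ⟨zg1, zg2, zg3⟩ := trilin_zero K hgt
  obtain ⟨zh1, zh2, zh3⟩ := trilin_zero K hht
  obtain ⟨zl1, zl2, zl3⟩ := trilin_zero K hl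
  obtain ⟨zm1, zm2, zm3⟩ := trilin_zero K hm
  obtain ⟨zr1, zr2, zr3⟩ := trilin_zero K hr
  obtain ⟨la1, ls1, la2, ls2, la3, ls3⟩ := hl
  obtain ⟨ma1, ms1, ma2, ms2, ma3, ms3⟩ := hm
  obtain ⟨ra1, rs1, ra2, rs2, ra3, rs3⟩ := hr
  obtain ⟨ga1, gs1, ga2, gs2, ga3, gs3⟩ := hgt
  obtain ⟨ha1, hs1, ha2, hs2, ha3, hs3⟩ := hht
  constructor
  · rintro ⟨⟨-, -, -, r1, r2, r3, r4, r5⟩, A1, A2, A3, A4, A5, A6⟩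
    refine ⟨⟨fun p p' q r => ?_, fun k p q r => ?_, fun p q q' r => ?_,
        fun k p q r => ?_, fun p q r r' => ?_, fun k p q r => ?_⟩,
        fun P Q X Y Z => ?_⟩
    · refine Prod.ext_iff.mpr ⟨?_, ?_⟩ <;>
        simp only [Prod.fst_add, Prod.snd_add, ga1, la1, ma1, ra1, ha1] <;> abel
    · refine Prod.ext_iff.mpr ⟨?_, ?_⟩ <;>
        simp only [Prod.smul_fst, Prod.smul_snd, gs1, ls1, ms1, rs1, hs1, smul_add] <;> abel
    · refine Prod.ext_iff.mpr ⟨?_, ?_⟩ <;>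
        simp only [Prod.fst_add, Prod.snd_add, ga2, la2, ma2, ra2, ha2] <;> abel
    · refine Prod.ext_iff.mpr ⟨?_, ?_⟩ <;>
        simp only [Prod.smul_fst, Prod.smul_snd, gs2, ls2, ms2, rs2, hs2, smul_add] <;> abel
    · refine Prod.ext_iff.mpr ⟨?_, ?_⟩ <;>
        simp only [Prod.fst_add, Prod.snd_add, ga3, la3, ma3, ra3, ha3] <;> abel
    · refine Prod.ext_iff.mpr ⟨?_, ?_⟩ <;>
        simp only [Prod.smul_fst, Prod.smul_snd, gs3, ls3, ms3, rs3, hs3, smul_add] <;> abel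
    · obtain ⟨a, α⟩ := P; obtain ⟨b, β⟩ := Q
      obtain ⟨x, u⟩ := X; obtain ⟨y, v⟩ := Y; obtain ⟨z, w⟩ := Z
      refine Prod.ext_iff.mpr ⟨?_, ?_⟩
      · simpa using hgFI a b x y z
      · simp only [Prod.fst_add, Prod.snd_add, la3, ma2, ra1, ha1, ha2, ha3]
        rw [r1 a b x y w, r2 a b x v z, r3 a b u y z, A1 a b u v w,
          r4 a β x y z, r5 α b x y z, hhFI α β u v w,
          ← A4 x y α β w, ← A5 x z α β v, ← A6 y z α β u]
        have h2 := A2 a β x y z u v w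
        have h3 := A3 α b x y z u v w
        have e2 : brh (ρm a β x) v w
            = 0 - brh u (ρm a β y) w - brh u v (ρm a β z) := by rw [← h2]; abel
        have e3 : brh (ρr α b x) v w
            = 0 - brh u (ρr α b y) w - brh u v (ρr α b z) := by rw [← h3]; abel
        rw [e2, e3]
        abel
  · rintro ⟨-, FI⟩
    have r1 : ∀ a b x y u, ρl a b (ρl x y u)
        = ρl (brg a b x) y u + ρl x (brg a b y) u + ρl x y (ρl a b u) := by
      intro a b x y u
      have hq := congrArg Prod.snd (FI (a, 0) (b, 0) (x, 0) (y, 0) (0, u))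
      simp only [Prod.snd_add, zg1, zg2, zg3, zh1, zh2, zh3, zl1, zl2, zl3,
        zm1, zm2, zm3, zr1, zr2, zr3, add_zero, zero_add] at hq
      exact hq
    have r2 : ∀ a b x u z, ρl a b (ρm x u z)
        = ρm (brg a b x) u z + ρm x (ρl a b u) z + ρm x u (brg a b z) := by
      intro a b x u z
      have hq := congrArg Prod.snd (FI (a, 0) (b, 0) (x, 0) (0, u) (z, 0))
      simp only [Prod.snd_add, zg1, zg2, zg3, zh1, zh2, zh3, zl1, zl2, zl3,
        zm1, zm2, zm3, zr1, zr2, zr3, add_zero, zero_add] at hq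
      exact hq
    have r3 : ∀ a b u y z, ρl a b (ρr u y z)
        = ρr (ρl a b u) y z + ρr u (brg a b y) z + ρr u y (brg a b z) := by
      intro a b u y z
      have hq := congrArg Prod.snd (FI (a, 0) (b, 0) (0, u) (y, 0) (z, 0))
      simp only [Prod.snd_add, zg1, zg2, zg3, zh1, zh2, zh3, zl1, zl2, zl3,
        zm1, zm2, zm3, zr1, zr2, zr3, add_zero, zero_add] at hq
      exact hq
    have r4 : ∀ a u x y z, ρm a u (brg x y z)
        = ρr (ρm a u x) y z + ρm x (ρm a u y) z + ρl x y (ρm a u z) := by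
      intro a u x y z
      have hq := congrArg Prod.snd (FI (a, 0) (0, u) (x, 0) (y, 0) (z, 0))
      simp only [Prod.snd_add, zg1, zg2, zg3, zh1, zh2, zh3, zl1, zl2, zl3,
        zm1, zm2, zm3, zr1, zr2, zr3, add_zero, zero_add] at hq
      exact hq
    have r5 : ∀ u b x y z, ρr u b (brg x y z)
        = ρr (ρr u b x) y z + ρm x (ρr u b y) z + ρl x y (ρr u b z) := by
      intro u b x y z
      have hq := congrArg Prod.snd (FI (0, u) (b, 0) (x, 0) (y, 0) (z, 0))
      simp only [Prod.snd_add, zg1, zg2, zg3, zh1, zh2, zh3, zl1, zl2, zl3,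
        zm1, zm2, zm3, zr1, zr2, zr3, add_zero, zero_add] at hq
      exact hq
    have A1 : ∀ a b u v w, ρl a b (brh u v w)
        = brh (ρl a b u) v w + brh u (ρl a b v) w + brh u v (ρl a b w) := by
      intro a b u v w
      have hq := congrArg Prod.snd (FI (a, 0) (b, 0) (0, u) (0, v) (0, w))
      simp only [Prod.snd_add, zg1, zg2, zg3, zh1, zh2, zh3, zl1, zl2, zl3,
        zm1, zm2, zm3, zr1, zr2, zr3, add_zero, zero_add] at hq
      exact hq
    have A2 : ∀ a s x y z u v w, brh (ρm a s x) v w + brh u (ρm a s y) w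
        + brh u v (ρm a s z) = 0 := by
      intro a s x y z u v w
      have hu := congrArg Prod.snd (FI (a, 0) (0, s) (x, u) (y, v) (z, w))
      have h0 := congrArg Prod.snd (FI (a, 0) (0, s) (x, 0) (y, 0) (z, 0))
      simp only [Prod.snd_add, zg1, zg2, zg3, zh1, zh2, zh3, zl1, zl2, zl3,
        zm1, zm2, zm3, zr1, zr2, zr3, add_zero, zero_add] at hu h0
      rw [← sub_eq_zero.mpr (hu.symm.trans h0)]
      abel
    have A3 : ∀ s a x y z u v w, brh (ρr s a x) v w + brh u (ρr s a y) w
        + brh u v (ρr s a z) = 0 := by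
      intro s a x y z u v w
      have hu := congrArg Prod.snd (FI (0, s) (a, 0) (x, u) (y, v) (z, w))
      have h0 := congrArg Prod.snd (FI (0, s) (a, 0) (x, 0) (y, 0) (z, 0))
      simp only [Prod.snd_add, zg1, zg2, zg3, zh1, zh2, zh3, zl1, zl2, zl3,
        zm1, zm2, zm3, zr1, zr2, zr3, add_zero, zero_add] at hu h0
      rw [← sub_eq_zero.mpr (hu.symm.trans h0)]
      abel
    have A4 : ∀ a b u v w, ρl a b (brh u v w) = brh u v (ρl a b w) := by
      intro a b u v w
      have hq := congrArg Prod.snd (FI (0, u) (0, v) (a, 0) (b, 0) (0, w))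
      simp only [Prod.snd_add, zg1, zg2, zg3, zh1, zh2, zh3, zl1, zl2, zl3,
        zm1, zm2, zm3, zr1, zr2, zr3, add_zero, zero_add] at hq
      exact hq.symm
    have A5 : ∀ a b u v w, ρm a (brh u v w) b = brh u v (ρm a w b) := by
      intro a b u v w
      have hq := congrArg Prod.snd (FI (0, u) (0, v) (a, 0) (0, w) (b, 0))
      simp only [Prod.snd_add, zg1, zg2, zg3, zh1, zh2, zh3, zl1, zl2, zl3,
        zm1, zm2, zm3, zr1, zr2, zr3, add_zero, zero_add] at hq
      exact hq.symm
    have A6 : ∀ a b u v w, ρr (brh u v w) a b = brh u v (ρr w a b) := by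
      intro a b u v w
      have hq := congrArg Prod.snd (FI (0, u) (0, v) (0, w) (a, 0) (b, 0))
      simp only [Prod.snd_add, zg1, zg2, zg3, zh1, zh2, zh3, zl1, zl2, zl3,
        zm1, zm2, zm3, zr1, zr2, zr3, add_zero, zero_add] at hq
      exact hq.symm
    exact ⟨⟨⟨la1, ls1, la2, ls2, la3, ls3⟩, ⟨ma1, ms1, ma2, ms2, ma3, ms3⟩,
      ⟨ra1, rs1, ra2, rs2, ra3, rs3⟩, r1, r2, r3, r4, r5⟩, A1, A2, A3, A4, A5, A6⟩
end

section
/- Let T: h→g be a homomorphic embedding tensor on a 3-Leibniz algebra (g,[·,·,·]_g) with respect to an action (h,[·,·,·]_h; ρl,ρm,ρr). Then (h, [·,·,·]_h, [·,·,·]_⊢^T, [·,·,·]_⊣^T, [·,·,·]_⊥^T) is a 3-tri-Leibniz dialgebra, where [u,v,w]_⊢^T := ρl(Tu,Tv,w), [u,v,w]_⊥^T := ρm(Tu,v,Tw), [u,v,w]_⊣^T := ρr(u,Tv,Tw) for all u,v,w ∈ h. -/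
universe u v

/-- a homomorphic embedding tensor `T : h → g` with respect to an action of
`g` on `h` makes `(h, brh, [·,·,·]_⊢^T, [·,·,·]_⊣^T, [·,·,·]_⊥^T)` a
3-tri-Leibniz dialgebra. -/
theorem statement9 (K : Type u) [Field K] [CharZero K] {g h : Type*}
    [AddCommGroup g] [Module K g] [AddCommGroup h] [Module K h]
    (brg : g → g → g → g) (hg : Is3Leibniz K brg)
    (brh : h → h → h → h) (hh : Is3Leibniz K brh)
    (ρl : g → g → h → h) (ρm : g → h → g → h) (ρr : h → g → g → h)
    (hact : IsAction K brg brh ρl ρm ρr) (T : h →ₗ[K] g)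
    (hT : IsEmbeddingTensor K brg ρl ρm ρr T)
    (hhom : ∀ u v w : h, T (brh u v w) = brg (T u) (T v) (T w)) :
    Is3TriLeibnizDialgebra K brh
      (fun u v w : h => ρl (T u) (T v) w)
      (fun u v w : h => ρr u (T v) (T w))
      (fun u v w : h => ρm (T u) v (T w)) := by
  obtain ⟨hrep, A1, A2, A3, A4, A5, A6⟩ := hact
  obtain ⟨tl, tm, tr, R1, R2, R3, R4, R5⟩ := hrep
  have hTol : ∀ u v w : h, T (ρl (T u) (T v) w) = brg (T u) (T v) (T w) :=
    fun u v w => ((hT u v w).1).symm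
  have hTop : ∀ u v w : h, T (ρm (T u) v (T w)) = brg (T u) (T v) (T w) :=
    fun u v w => ((hT u v w).2.1).symm
  have hTod : ∀ u v w : h, T (ρr u (T v) (T w)) = brg (T u) (T v) (T w) :=
    fun u v w => ((hT u v w).2.2).symm
  refine ⟨hh, ⟨?_, ?_, ?_, ?_⟩, ?_⟩
  · exact ⟨fun a a' b c => by simp [map_add, tl.1],
      fun k a b c => by simp [map_smul, tl.2.1],
      fun a b b' c => by simp [map_add, tl.2.2.1],
      fun k a b c => by simp [map_smul, tl.2.2.2.1],
      fun a b c c' => by simp [tl.2.2.2.2.1],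
      fun k a b c => by simp [tl.2.2.2.2.2]⟩
  · exact ⟨fun a a' b c => by simp [tr.1],
      fun k a b c => by simp [tr.2.1],
      fun a b b' c => by simp [map_add, tr.2.2.1],
      fun k a b c => by simp [map_smul, tr.2.2.2.1],
      fun a b c c' => by simp [map_add, tr.2.2.2.2.1],
      fun k a b c => by simp [map_smul, tr.2.2.2.2.2]⟩
  · exact ⟨fun a a' b c => by simp [map_add, tm.1],
      fun k a b c => by simp [map_smul, tm.2.1],
      fun a b b' c => by simp [tm.2.2.1],
      fun k a b c => by simp [tm.2.2.2.1],
      fun a b c c' => by simp [map_add, tm.2.2.2.2.1],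
      fun k a b c => by simp [map_smul, tm.2.2.2.2.2]⟩
  · intro tri htri a b x y z
    have hTtri : ∀ u v w : h, T (tri u v w) = brg (T u) (T v) (T w) := by
      rcases htri with rfl | rfl | rfl
      exacts [hTol, hTod, hTop]
    refine ⟨?_, ?_, ?_, ?_, ?_⟩
    · simp only [hTtri]
      exact R5 a (T b) (T x) (T y) (T z)
    · simp only [hTtri]
      exact R3 (T a) (T b) x (T y) (T z)
    · simp only [hTtri]
      exact R1 (T a) (T b) (T x) (T y) z
    · simp only [hTtri]
      exact R2 (T a) (T b) (T x) y (T z)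
    · simp only [hTtri]
      exact R4 (T a) b (T x) (T y) (T z)
  · intro tri htri a b x y z
    have hTtri : ∀ u v w : h, T (tri u v w) = brg (T u) (T v) (T w) := by
      rcases htri with rfl | rfl | rfl
      exacts [hTol, hTod, hTop]
    refine ⟨A1 (T a) (T b) x y z,
      A2 (T a) b (T x) (T y) (T z) x y z,
      A3 a (T b) (T x) (T y) (T z) x y z,
      A4 (T a) (T b) x y z,
      A5 (T a) (T b) x y z,
      A6 (T a) (T b) x y z, ?_, ?_, ?_, ?_, ?_, ?_⟩ <;>
      simp only [hhom, hTtri]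
end

section
/- Let T: V→g be an embedding tensor on a 3-Leibniz algebra g with respect to a representation (V;ρl,ρm,ρr) and let T1: V→g be a linear map. Then T + tT1 is an embedding tensor for every t ∈ K if and only if the following hold for all u,v,w ∈ V: (1) [Tu,Tv,T1w] + [Tu,T1v,Tw] + [T1u,Tv,Tw] equals each of T1(ρl(Tu,Tv,w)) + T(ρl(T1u,Tv,w)) + T(ρl(Tu,T1v,w)), T1(ρm(Tu,v,Tw)) + T(ρm(T1u,v,Tw)) + T(ρm(Tu,v,T1w)), and T1(ρr(u,Tv,Tw)) + T(ρr(u,Tv,T1w)) + T(ρr(u,T1v,Tw)); (2) [Tu,T1v,T1w] + [T1u,Tv,T1w] + [T1u,T1v,Tw] equals each of T(ρl(T1u,T1v,w)) + T1(ρl(Tu,T1v,w)) + T1(ρl(T1u,Tv,w)), T(ρm(T1u,v,T1w)) + T1(ρm(Tu,v,T1w)) + T1(ρm(T1u,v,Tw)), and T(ρr(u,T1v,T1w)) + T1(ρr(u,Tv,T1w)) + T1(ρr(u,T1v,Tw)); (3) [T1u,T1v,T1w] = T1(ρl(T1u,T1v,w)) = T1(ρm(T1u,v,T1w)) = T1(ρr(u,T1v,T1w)).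 In particular, if T + tT1 is an embedding tensor for every t ∈ K, then T1 is itself an embedding tensor on g with respect to (V;ρl,ρm,ρr). -/
universe u v

private lemma cubicZero (K : Type u) [Field K] [CharZero K] {M : Type*}
    [AddCommGroup M] [Module K M] (c1 c2 c3 : M)
    (h : ∀ t : K, t • c1 + t ^ 2 • c2 + t ^ 3 • c3 = 0) :
    c1 = 0 ∧ c2 = 0 ∧ c3 = 0 := by
  have e2 : (2 : K) • c2 = 0 := by
    linear_combination (norm := module) h 1 + h (-1)
  have hc2 : c2 = 0 := by
    rcases smul_eq_zero.mp e2 with h' | h'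
    · exact absurd h' two_ne_zero
    · exact h'
  have e3 : (6 : K) • c3 = 0 := by
    linear_combination (norm := module) h 2 - (2 : K) • h 1 - e2
  have hc3 : c3 = 0 := by
    rcases smul_eq_zero.mp e3 with h' | h'
    · exact absurd h' (by norm_num)
    · exact h'
  have hc1 : c1 = 0 := by
    have h1 := h 1
    simp only [hc2, hc3, smul_zero, add_zero, one_smul] at h1
    exact h1
  exact ⟨hc1, hc2, hc3⟩

/-- `T + t•T1` is an embedding tensor for every `t ∈ K` iff the three
families of equations (1), (2), (3) hold; in particular, if `T + t•T1` is an embedding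
tensor for every `t`, then `T1` is itself an embedding tensor. -/
theorem statement12 (K : Type u) [Field K] [CharZero K] {g V : Type*}
    [AddCommGroup g] [Module K g] [AddCommGroup V] [Module K V]
    (br : g → g → g → g) (hbr : Is3Leibniz K br)
    (ρl : g → g → V → V) (ρm : g → V → g → V) (ρr : V → g → g → V)
    (hrep : IsRep K br ρl ρm ρr) (T : V →ₗ[K] g)
    (hT : IsEmbeddingTensor K br ρl ρm ρr T) (T1 : V →ₗ[K] g) :
    ((∀ t : K, IsEmbeddingTensor K br ρl ρm ρr (T + t • T1)) ↔
      ∀ u v w : V,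
        (br (T u) (T v) (T1 w) + br (T u) (T1 v) (T w) + br (T1 u) (T v) (T w) =
            T1 (ρl (T u) (T v) w) + T (ρl (T1 u) (T v) w) + T (ρl (T u) (T1 v) w) ∧
          br (T u) (T v) (T1 w) + br (T u) (T1 v) (T w) + br (T1 u) (T v) (T w) =
            T1 (ρm (T u) v (T w)) + T (ρm (T1 u) v (T w)) + T (ρm (T u) v (T1 w)) ∧
          br (T u) (T v) (T1 w) + br (T u) (T1 v) (T w) + br (T1 u) (T v) (T w) =
            T1 (ρr u (T v) (T w)) + T (ρr u (T v) (T1 w)) + T (ρr u (T1 v) (T w))) ∧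
        (br (T u) (T1 v) (T1 w) + br (T1 u) (T v) (T1 w) + br (T1 u) (T1 v) (T w) =
            T (ρl (T1 u) (T1 v) w) + T1 (ρl (T u) (T1 v) w) + T1 (ρl (T1 u) (T v) w) ∧
          br (T u) (T1 v) (T1 w) + br (T1 u) (T v) (T1 w) + br (T1 u) (T1 v) (T w) =
            T (ρm (T1 u) v (T1 w)) + T1 (ρm (T u) v (T1 w)) + T1 (ρm (T1 u) v (T w)) ∧
          br (T u) (T1 v) (T1 w) + br (T1 u) (T v) (T1 w) + br (T1 u) (T1 v) (T w) =
            T (ρr u (T1 v) (T1 w)) + T1 (ρr u (T v) (T1 w)) + T1 (ρr u (T1 v) (T w))) ∧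
        (br (T1 u) (T1 v) (T1 w) = T1 (ρl (T1 u) (T1 v) w) ∧
          br (T1 u) (T1 v) (T1 w) = T1 (ρm (T1 u) v (T1 w)) ∧
          br (T1 u) (T1 v) (T1 w) = T1 (ρr u (T1 v) (T1 w)))) ∧
    ((∀ t : K, IsEmbeddingTensor K br ρl ρm ρr (T + t • T1)) →
      IsEmbeddingTensor K br ρl ρm ρr T1) := by
  obtain ⟨⟨bA1, bS1, bA2, bS2, bA3, bS3⟩, -⟩ := hbr
  obtain ⟨⟨lA1, lS1, lA2, lS2, lA3, lS3⟩, ⟨mA1, mS1, mA2, mS2, mA3, mS3⟩,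
    ⟨rA1, rS1, rA2, rS2, rA3, rS3⟩, -⟩ := hrep
  have hiff : (∀ t : K, IsEmbeddingTensor K br ρl ρm ρr (T + t • T1)) ↔
      ∀ u v w : V,
        (br (T u) (T v) (T1 w) + br (T u) (T1 v) (T w) + br (T1 u) (T v) (T w) =
            T1 (ρl (T u) (T v) w) + T (ρl (T1 u) (T v) w) + T (ρl (T u) (T1 v) w) ∧
          br (T u) (T v) (T1 w) + br (T u) (T1 v) (T w) + br (T1 u) (T v) (T w) =
            T1 (ρm (T u) v (T w)) + T (ρm (T1 u) v (T w)) + T (ρm (T u) v (T1 w)) ∧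
          br (T u) (T v) (T1 w) + br (T u) (T1 v) (T w) + br (T1 u) (T v) (T w) =
            T1 (ρr u (T v) (T w)) + T (ρr u (T v) (T1 w)) + T (ρr u (T1 v) (T w))) ∧
        (br (T u) (T1 v) (T1 w) + br (T1 u) (T v) (T1 w) + br (T1 u) (T1 v) (T w) =
            T (ρl (T1 u) (T1 v) w) + T1 (ρl (T u) (T1 v) w) + T1 (ρl (T1 u) (T v) w) ∧
          br (T u) (T1 v) (T1 w) + br (T1 u) (T v) (T1 w) + br (T1 u) (T1 v) (T w) =
            T (ρm (T1 u) v (T1 w)) + T1 (ρm (T u) v (T1 w)) + T1 (ρm (T1 u) v (T w)) ∧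
          br (T u) (T1 v) (T1 w) + br (T1 u) (T v) (T1 w) + br (T1 u) (T1 v) (T w) =
            T (ρr u (T1 v) (T1 w)) + T1 (ρr u (T v) (T1 w)) + T1 (ρr u (T1 v) (T w))) ∧
        (br (T1 u) (T1 v) (T1 w) = T1 (ρl (T1 u) (T1 v) w) ∧
          br (T1 u) (T1 v) (T1 w) = T1 (ρm (T1 u) v (T1 w)) ∧
          br (T1 u) (T1 v) (T1 w) = T1 (ρr u (T1 v) (T1 w))) := by
    constructor
    · intro h u v w
      have keyl : ∀ t : K,
          t • (br (T u) (T v) (T1 w) + br (T u) (T1 v) (T w) + br (T1 u) (T v) (T w)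
              - (T1 (ρl (T u) (T v) w) + T (ρl (T1 u) (T v) w) + T (ρl (T u) (T1 v) w)))
          + t ^ 2 • (br (T u) (T1 v) (T1 w) + br (T1 u) (T v) (T1 w) + br (T1 u) (T1 v) (T w)
              - (T (ρl (T1 u) (T1 v) w) + T1 (ρl (T u) (T1 v) w) + T1 (ρl (T1 u) (T v) w)))
          + t ^ 3 • (br (T1 u) (T1 v) (T1 w) - T1 (ρl (T1 u) (T1 v) w)) = 0 := by
        intro t
        have H := (h t u v w).1
        simp only [LinearMap.add_apply, LinearMap.smul_apply, bA1, bS1, bA2, bS2, bA3, bS3,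
          lA1, lS1, lA2, lS2, map_add, map_smul] at H
        linear_combination (norm := module) H - (hT u v w).1
      have keym : ∀ t : K,
          t • (br (T u) (T v) (T1 w) + br (T u) (T1 v) (T w) + br (T1 u) (T v) (T w)
              - (T1 (ρm (T u) v (T w)) + T (ρm (T1 u) v (T w)) + T (ρm (T u) v (T1 w))))
          + t ^ 2 • (br (T u) (T1 v) (T1 w) + br (T1 u) (T v) (T1 w) + br (T1 u) (T1 v) (T w)
              - (T (ρm (T1 u) v (T1 w)) + T1 (ρm (T u) v (T1 w)) + T1 (ρm (T1 u) v (T w))))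
          + t ^ 3 • (br (T1 u) (T1 v) (T1 w) - T1 (ρm (T1 u) v (T1 w))) = 0 := by
        intro t
        have H := (h t u v w).2.1
        simp only [LinearMap.add_apply, LinearMap.smul_apply, bA1, bS1, bA2, bS2, bA3, bS3,
          mA1, mS1, mA3, mS3, map_add, map_smul] at H
        linear_combination (norm := module) H - (hT u v w).2.1
      have keyr : ∀ t : K,
          t • (br (T u) (T v) (T1 w) + br (T u) (T1 v) (T w) + br (T1 u) (T v) (T w)
              - (T1 (ρr u (T v) (T w)) + T (ρr u (T v) (T1 w)) + T (ρr u (T1 v) (T w))))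
          + t ^ 2 • (br (T u) (T1 v) (T1 w) + br (T1 u) (T v) (T1 w) + br (T1 u) (T1 v) (T w)
              - (T (ρr u (T1 v) (T1 w)) + T1 (ρr u (T v) (T1 w)) + T1 (ρr u (T1 v) (T w))))
          + t ^ 3 • (br (T1 u) (T1 v) (T1 w) - T1 (ρr u (T1 v) (T1 w))) = 0 := by
        intro t
        have H := (h t u v w).2.2
        simp only [LinearMap.add_apply, LinearMap.smul_apply, bA1, bS1, bA2, bS2, bA3, bS3,
          rA2, rS2, rA3, rS3, map_add, map_smul] at H
        linear_combination (norm := module) H - (hT u v w).2.2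
      obtain ⟨hl1, hl2, hl3⟩ := cubicZero K _ _ _ keyl
      obtain ⟨hm1, hm2, hm3⟩ := cubicZero K _ _ _ keym
      obtain ⟨hr1, hr2, hr3⟩ := cubicZero K _ _ _ keyr
      exact ⟨⟨sub_eq_zero.mp hl1, sub_eq_zero.mp hm1, sub_eq_zero.mp hr1⟩,
        ⟨sub_eq_zero.mp hl2, sub_eq_zero.mp hm2, sub_eq_zero.mp hr2⟩,
        ⟨sub_eq_zero.mp hl3, sub_eq_zero.mp hm3, sub_eq_zero.mp hr3⟩⟩
    · intro h t u v w
      obtain ⟨⟨e1l, e1m, e1r⟩, ⟨e2l, e2m, e2r⟩, ⟨e3l, e3m, e3r⟩⟩ := h u v w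
      refine ⟨?_, ?_, ?_⟩
      · simp only [LinearMap.add_apply, LinearMap.smul_apply, bA1, bS1, bA2, bS2, bA3, bS3,
          lA1, lS1, lA2, lS2, map_add, map_smul]
        linear_combination (norm := module) (hT u v w).1 + t • e1l + t ^ 2 • e2l + t ^ 3 • e3l
      · simp only [LinearMap.add_apply, LinearMap.smul_apply, bA1, bS1, bA2, bS2, bA3, bS3,
          mA1, mS1, mA3, mS3, map_add, map_smul]
        linear_combination (norm := module) (hT u v w).2.1 + t • e1m + t ^ 2 • e2m + t ^ 3 • e3m
      · simp only [LinearMap.add_apply, LinearMap.smul_apply, bA1, bS1, bA2, bS2, bA3, bS3,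
          rA2, rS2, rA3, rS3, map_add, map_smul]
        linear_combination (norm := module) (hT u v w).2.2 + t • e1r + t ^ 2 • e2r + t ^ 3 • e3r
  exact ⟨hiff, fun h u v w => ((hiff.mp h) u v w).2.2⟩
end

section
/- Let T: V→g be an embedding tensor on a 3-Leibniz algebra g with respect to a representation (V;ρl,ρm,ρr), let T1, T̃1: V→g be linear maps, and let a,b ∈ g. For t ∈ K set T_t := T + tT1, T̃_t := T + tT̃1, φ_t(x) := x + t[a,b,x] and ψ_t(u) := u + t·ρl(a,b,u). If T_t(ψ_t(u)) = φ_t(T̃_t(u)) holds for all u ∈ V and all t ∈ K, then T̃1(u) − T1(u) = T(ρl(a,b,u)) − [a,b,Tu] for all u ∈ V; that is, the 1-cocycles T1 and T̃1 are cohomologous, differing by the coboundary δ(a,b)(u) := T(ρl(a,b,u)) − [a,b,Tu]. -/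
universe u v

/-- if `T_t ∘ ψ_t = φ_t ∘ T̃_t` for all `t`, then `T̃1 − T1` is the
coboundary `δ(a,b)(u) = T(ρl(a,b,u)) − [a,b,Tu]`, i.e., `T1` and `T̃1` are cohomologous. -/
theorem statement13 (K : Type u) [Field K] [CharZero K] {g V : Type*}
    [AddCommGroup g] [Module K g] [AddCommGroup V] [Module K V]
    (br : g → g → g → g) (hbr : Is3Leibniz K br)
    (ρl : g → g → V → V) (ρm : g → V → g → V) (ρr : V → g → g → V)
    (hrep : IsRep K br ρl ρm ρr) (T : V →ₗ[K] g)
    (hT : IsEmbeddingTensor K br ρl ρm ρr T)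
    (T1 Tt1 : V →ₗ[K] g) (a b : g)
    (hcomm : ∀ (t : K) (u : V),
      (T + t • T1) (u + t • ρl a b u) =
        (T + t • Tt1) u + t • br a b ((T + t • Tt1) u)) :
    ∀ u : V, Tt1 u - T1 u = T (ρl a b u) - br a b (T u) := by
  obtain ⟨⟨_, _, _, _, hadd, hsmul⟩, _⟩ := hbr
  intro u
  have hneg : ∀ x, br a b (-x) = -br a b x := fun x => by
    rw [← neg_one_smul K x, hsmul, neg_one_smul]
  have h1 := hcomm 1 u
  have h2 := hcomm (-1) u
  simp only [one_smul, neg_smul, neg_neg, LinearMap.add_apply, LinearMap.smul_apply,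
    LinearMap.neg_apply, map_add, map_neg, smul_neg, neg_add_rev, hadd, hsmul, hneg] at h1 h2
  have h4 := congrArg₂ (· - ·) h1 h2
  abel_nf at h4
  have h5 : (2:K) • (T1 u + T (ρl a b u)) = (2:K) • (Tt1 u + br a b (T u)) := by
    rw [smul_add, smul_add, two_smul, two_smul, two_smul, two_smul]
    abel_nf
    exact h4
  have h6 := smul_right_injective g two_ne_zero h5
  rw [sub_eq_sub_iff_add_eq_add, ← h6]
  abel
end

section
/- Let (g,[·,·,·]_g) be a 3-Leibniz algebra over a field K of characteristic zero. Then the tensor product g⊗g, equipped with the bilinear bracket determined on elementary tensors by [x1⊗x2, y1⊗y2] := [x1,x2,y1]_g ⊗ y2 + y1 ⊗ [x1,x2,y2]_g, is a (left) Leibniz algebra: [X,[Y,Z]] = [[X,Y],Z] + [Y,[X,Z]] for all X,Y,Z ∈ g⊗g. -/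
universe u v

/-- for a 3-Leibniz algebra `(g, br)`, the bilinear bracket on `g ⊗ g`
determined on elementary tensors by
`[x1⊗x2, y1⊗y2] = [x1,x2,y1]⊗y2 + y1⊗[x1,x2,y2]` is a (left) Leibniz bracket. -/
theorem statement17 (K : Type u) [Field K] [CharZero K] {g : Type v}
    [AddCommGroup g] [Module K g]
    (br : g → g → g → g) (hbr : Is3Leibniz K br)
    (B : TensorProduct K g g → TensorProduct K g g → TensorProduct K g g)
    (hB : IsBilinear K B)
    (hform : ∀ x1 x2 y1 y2 : g,
      B (x1 ⊗ₜ[K] x2) (y1 ⊗ₜ[K] y2) =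
        br x1 x2 y1 ⊗ₜ[K] y2 + y1 ⊗ₜ[K] br x1 x2 y2) :
    ∀ X Y Z : TensorProduct K g g, B X (B Y Z) = B (B X Y) Z + B Y (B X Z) := by
  obtain ⟨_, hFI⟩ := hbr
  obtain ⟨hBa1, hBs1, hBa2, hBs2⟩ := hB
  have h0r : ∀ X, B X 0 = 0 := by
    intro X
    have h : B X ((0:K) • (0 : TensorProduct K g g)) = (0:K) • B X 0 := hBs2 0 X 0
    simpa using h
  have h0l : ∀ X, B 0 X = 0 := by
    intro X
    have h : B ((0:K) • (0 : TensorProduct K g g)) X = (0:K) • B 0 X := hBs1 0 0 X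
    simpa using h
  intro X Y Z
  induction X using TensorProduct.induction_on with
  | zero => simp [h0l, h0r]
  | add X1 X2 ih1 ih2 => simp only [hBa1, hBa2, ih1, ih2]; abel
  | tmul a b =>
      induction Y using TensorProduct.induction_on with
      | zero => simp [h0l, h0r]
      | add Y1 Y2 ih1 ih2 => simp only [hBa1, hBa2, ih1, ih2]; abel
      | tmul x y =>
          induction Z using TensorProduct.induction_on with
          | zero => simp [h0l, h0r]
          | add Z1 Z2 ih1 ih2 => simp only [hBa1, hBa2, ih1, ih2]; abel
          | tmul u v =>
              rw [hform x y u v, hBa2, hform a b (br x y u) v, hform a b u (br x y v),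
                hform a b x y, hBa1, hform (br a b x) y u v, hform x (br a b y) u v,
                hform a b u v, hBa2, hform x y (br a b u) v, hform x y u (br a b v),
                hFI a b x y u, hFI a b x y v]
              simp only [TensorProduct.add_tmul, TensorProduct.tmul_add]
              abel
end
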